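/- arXiv:2605.12425 — 2 statements merged into one kernel-verified Lean document; each statement's English description precedes it below -/
import Mathlib

section
/- Define the ℤ-valued fitness function f on Boolean assignments x = (x0, x1, x2, x3, x4) ∈ {0,1}^5 by f(x) = 11·x0 + x1 + x2 + 3·x3 + x4 − 2·x0·x1 − 4·x0·x2 − 4·x0·x3 − 2·x0·x4 + 2·x1·x2 − 2·x3·x4. Then the sequence of assignments 00000, 00001, 00011, 00111, 10111, 11111, 01111, 01110, 11110, 11100, 11000, 10000 (written as x0 x1 x2 x3 x4) is a strict ascent: consecutive assignments differ in exactly one coordinate and f is strictly increasing along the sequence, taking values 0, 1, 2, 3, 4, 5, 6, 7, 8, 9, 10, 11. -/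
/-- Interpret a Boolean as the integer 0 or 1. -/
def b2i (t : Bool) : ℤ := if t then 1 else 0

/-- Fitness function of the basic gadget on five Boolean variables. -/
def gadgetF (x : Fin 5 → Bool) : ℤ :=
  11 * b2i (x 0) + b2i (x 1) + b2i (x 2) + 3 * b2i (x 3) + b2i (x 4)
    - 2 * b2i (x 0) * b2i (x 1) - 4 * b2i (x 0) * b2i (x 2)
    - 4 * b2i (x 0) * b2i (x 3) - 2 * b2i (x 0) * b2i (x 4)
    + 2 * b2i (x 1) * b2i (x 2) - 2 * b2i (x 3) * b2i (x 4)

/-- Two assignments are adjacent if they differ in exactly one coordinate. -/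
def Adjacent {m : ℕ} (x y : Fin m → Bool) : Prop :=
  ∃ u, x u ≠ y u ∧ ∀ v, v ≠ u → x v = y v

/-- The 12-step sequence of assignments (written x0 x1 x2 x3 x4). -/
def gadgetSeq : Fin 12 → Fin 5 → Bool :=
  ![![false, false, false, false, false],
    ![false, false, false, false, true],
    ![false, false, false, true,  true],
    ![false, false, true,  true,  true],
    ![true,  false, true,  true,  true],
    ![true,  true,  true,  true,  true],
    ![false, true,  true,  true,  true],
    ![false, true,  true,  true,  false],
    ![true,  true,  true,  true,  false],
    ![true,  true,  true,  false, false],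
    ![true,  true,  false, false, false],
    ![true,  false, false, false, false]]

theorem gadget_strict_ascent :
    (∀ t : Fin 11, Adjacent (gadgetSeq t.castSucc) (gadgetSeq t.succ)) ∧
    (∀ t : Fin 12, gadgetF (gadgetSeq t) = (t : ℤ)) := by
  constructor
  · intro t
    fin_cases t <;>
      simp only [Adjacent, gadgetSeq, Fin.isValue] <;>
      first
        | exact ⟨0, by decide, by decide⟩
        | exact ⟨1, by decide, by decide⟩
        | exact ⟨2, by decide, by decide⟩
        | exact ⟨3, by decide, by decide⟩
        | exact ⟨4, by decide, by decide⟩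
  · intro t
    fin_cases t <;> decide
end

section
/- The underlying constraint graph of the star-of-gadgets construction C_{≤n} (the graph on vertex set {0} ∪ ⋃_{k=1}^n {(1,k),(2,k),(3,k),(4,k)} with edges {0,(i,k)} for all i ∈ {1,2,3,4} and k ∈ [n], together with edges {(1,k),(2,k)} and {(3,k),(4,k)} for all k ∈ [n]) has treedepth exactly 3. -/
/-- `r` is an elimination (forest) order for `G`: a partial order on the vertices in which
the set of strict ancestors of each vertex is a chain, and every edge of `G` joins a
comparable (ancestor–descendant) pair. -/
def IsElimOrder {V : Type*} (G : SimpleGraph V) (r : V → V → Prop) : Prop :=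
  IsPartialOrder V r ∧ (∀ v : V, IsChain r {u | r v u}) ∧
    ∀ u v, G.Adj u v → r u v ∨ r v u

/-- The treedepth of `G`: the least `d` such that `G` has an elimination order all of whose
chains have at most `d` vertices (i.e. an elimination forest of height `d`). -/
noncomputable def treedepth {V : Type*} (G : SimpleGraph V) : ℕ :=
  sInf {d | ∃ r : V → V → Prop, IsElimOrder G r ∧
    ∀ s : Finset V, IsChain r ↑s → s.card ≤ d}

/-- The constraint graph of the star-of-gadgets construction `C_{≤n}`:
centre vertex `none`, and for each gadget `k` vertices `some (k, i)`, `i : Fin 4`,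
with edges from the centre to each `some (k, i)`, plus edges
`{(1,k),(2,k)}` and `{(3,k),(4,k)}` (indices `0,1` and `2,3` here). -/
def starGraph (n : ℕ) : SimpleGraph (Option (Fin n × Fin 4)) :=
  SimpleGraph.fromRel (fun a b =>
    (a = none ∧ b ≠ none) ∨
    (∃ k, a = some (k, 0) ∧ b = some (k, 1)) ∨
    (∃ k, a = some (k, 2) ∧ b = some (k, 3)))

/-- the elimination order: `r u v` means `v` is an ancestor of `u`. -/
def srel (n : ℕ) (u v : Option (Fin n × Fin 4)) : Prop :=
  u = v ∨ v = none ∨ (∃ k, u = some (k, 1) ∧ v = some (k, 0)) ∨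
    (∃ k, u = some (k, 3) ∧ v = some (k, 2))

lemma srel_po (n : ℕ) : IsPartialOrder _ (srel n) := by
  refine { refl := fun a => Or.inl rfl, trans := ?_, antisymm := ?_ }
  · intro a b c hab hbc
    rcases hab with rfl | rfl | ⟨k, rfl, rfl⟩ | ⟨k, rfl, rfl⟩ <;>
      rcases hbc with h | h | ⟨k', h1, h2⟩ | ⟨k', h1, h2⟩ <;>
        simp_all [srel]
  · intro a b hab hba
    rcases hab with rfl | rfl | ⟨k, rfl, rfl⟩ | ⟨k, rfl, rfl⟩ <;>
      rcases hba with h | h | ⟨k', h1, h2⟩ | ⟨k', h1, h2⟩ <;> simp_all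

lemma srel_chain (n : ℕ) (v : Option (Fin n × Fin 4)) : IsChain (srel n) {u | srel n v u} := by
  intro a ha b hb hne
  rcases ha with rfl | rfl | ⟨k, hv, rfl⟩ | ⟨k, hv, rfl⟩ <;>
    rcases hb with h | rfl | ⟨k', hv', rfl⟩ | ⟨k', hv', rfl⟩ <;>
      simp_all [srel]

def lvl (n : ℕ) : Option (Fin n × Fin 4) → Fin 3
  | none => 0
  | some (_, i) => if i.val % 2 = 0 then 1 else 2

lemma lvl_ne {n : ℕ} {a b : Option (Fin n × Fin 4)} (hne : a ≠ b) (h : srel n a b) :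
    lvl n a ≠ lvl n b := by
  rcases h with rfl | rfl | ⟨k, rfl, rfl⟩ | ⟨k, rfl, rfl⟩
  · exact absurd rfl hne
  · rcases a with _ | ⟨k, i⟩
    · exact absurd rfl hne
    · simp only [lvl]
      split <;> decide
  · simp only [lvl]; decide
  · simp only [lvl]; decide

theorem starGraph_treedepth (n : ℕ) (hn : 1 ≤ n) : treedepth (starGraph n) = 3 := by
  have h3 : 3 ∈ {d | ∃ r : Option (Fin n × Fin 4) → Option (Fin n × Fin 4) → Prop,
      IsElimOrder (starGraph n) r ∧ ∀ s : Finset (Option (Fin n × Fin 4)), IsChain r ↑s → s.card ≤ d} := by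
    refine ⟨srel n, ⟨srel_po n, srel_chain n, ?_⟩, ?_⟩
    · intro u v huv
      rw [starGraph, SimpleGraph.fromRel_adj] at huv
      obtain ⟨hne, h | h⟩ := huv <;>
        rcases h with ⟨h1, h2⟩ | ⟨k, rfl, rfl⟩ | ⟨k, rfl, rfl⟩
      · exact Or.inr (Or.inr (Or.inl h1))
      · exact Or.inr (Or.inr (Or.inr (Or.inl ⟨k, rfl, rfl⟩)))
      · exact Or.inr (Or.inr (Or.inr (Or.inr ⟨k, rfl, rfl⟩)))
      · exact Or.inl (Or.inr (Or.inl h1))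
      · exact Or.inl (Or.inr (Or.inr (Or.inl ⟨k, rfl, rfl⟩)))
      · exact Or.inl (Or.inr (Or.inr (Or.inr ⟨k, rfl, rfl⟩)))
    · intro s hs
      classical
      have hinj : Set.InjOn (lvl n) s := by
        intro a ha b hb hfab
        by_contra hne
        rcases hs ha hb hne with h | h
        · exact lvl_ne hne h hfab
        · exact lvl_ne (Ne.symm hne) h hfab.symm
      calc s.card = (s.image (lvl n)).card := (Finset.card_image_of_injOn hinj).symm
        _ ≤ Fintype.card (Fin 3) := Finset.card_le_univ _
        _ = 3 := by simp
  refine le_antisymm (Nat.sInf_le h3) (le_csInf ⟨3, h3⟩ ?_)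
  rintro d ⟨r, ⟨hpo, _, hadj⟩, hcard⟩
  have k0 : Fin n := ⟨0, hn⟩
  set a : Option (Fin n × Fin 4) := some (k0, 0)
  set b : Option (Fin n × Fin 4) := some (k0, 1)
  have e1 : (starGraph n).Adj none a := by
    rw [starGraph, SimpleGraph.fromRel_adj]
    exact ⟨by simp [a], Or.inl (Or.inl ⟨rfl, by simp [a]⟩)⟩
  have e2 : (starGraph n).Adj none b := by
    rw [starGraph, SimpleGraph.fromRel_adj]
    exact ⟨by simp [b], Or.inl (Or.inl ⟨rfl, by simp [b]⟩)⟩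
  have e3 : (starGraph n).Adj a b := by
    rw [starGraph, SimpleGraph.fromRel_adj]
    refine ⟨by simp [a, b], Or.inl (Or.inr (Or.inl ⟨k0, rfl, rfl⟩))⟩
  have hab : a ≠ b := by simp [a, b]
  have hs : IsChain r ({none, a, b} : Finset (Option (Fin n × Fin 4))) := by
    intro x hx y hy hne
    simp only [Finset.coe_insert, Finset.coe_singleton, Set.mem_insert_iff,
      Set.mem_singleton_iff] at hx hy
    rcases hx with rfl | rfl | rfl <;> rcases hy with rfl | rfl | rfl <;>
      first
      | exact absurd rfl hne
      | exact hadj _ _ e1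
      | exact (hadj _ _ e1).symm
      | exact hadj _ _ e2
      | exact (hadj _ _ e2).symm
      | exact hadj _ _ e3
      | exact (hadj _ _ e3).symm
  have := hcard _ hs
  have hc : ({none, a, b} : Finset (Option (Fin n × Fin 4))).card = 3 := by
    rw [Finset.card_insert_of_notMem (by simp [a, b]),
      Finset.card_insert_of_notMem (by simp [hab])]
    rfl
  omega
end
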